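/- arXiv:2209.05803 — 5 statements merged into one kernel-verified Lean document; each statement's English description precedes it below -/
import Mathlib

section
/- Let S be a numerical semigroup (a submonoid of ℕ with finite complement) and x ∈ S. Then S \ {x} is a numerical semigroup if and only if x is a minimal generator of S (i.e., x ≠ 0 and x cannot be written as s₁ + s₂ with s₁, s₂ ∈ S \ {0}). -/
open Set

/-- A numerical semigroup: a submonoid of ℕ with finite complement. -/
def IsNumSgp (S : Set ℕ) : Prop :=
  0 ∈ S ∧ (∀ a ∈ S, ∀ b ∈ S, a + b ∈ S) ∧ Sᶜ.Finite

/-- The Frobenius number: the largest gap. -/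
noncomputable def frob (S : Set ℕ) : ℕ := sSup Sᶜ

/-- The multiplicity: the least nonzero element. -/
noncomputable def mult (S : Set ℕ) : ℕ := sInf (S \ {0})

/-- The genus: the number of gaps. -/
noncomputable def genus (S : Set ℕ) : ℕ := Sᶜ.ncard

/-- The number of left elements: elements of S smaller than the Frobenius number. -/
noncomputable def leftEls (S : Set ℕ) : ℕ := {s ∈ S | s < frob S}.ncard

/-- x is a minimal generator of S: nonzero and not a sum of two nonzero elements of S. -/
def IsMinGen (S : Set ℕ) (x : ℕ) : Prop :=
  x ∈ S ∧ x ≠ 0 ∧ ¬ ∃ a ∈ S, ∃ b ∈ S, a ≠ 0 ∧ b ≠ 0 ∧ x = a + b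

/-- The embedding dimension: number of minimal generators. -/
noncomputable def edim (S : Set ℕ) : ℕ := {x | IsMinGen S x}.ncard

/-- The set of special gaps of S. -/
def SG (S : Set ℕ) : Set ℕ :=
  {h | h ∉ S ∧ 2 * h ∈ S ∧ ∀ s ∈ S, s ≠ 0 → h + s ∈ S}

/-- Irreducible numerical semigroup (characterization via special gaps). -/
def IsIrred (S : Set ℕ) : Prop := SG S = {frob S}

/-- Ordinary numerical semigroup. -/
def IsOrdinary (S : Set ℕ) : Prop := ∃ c, S = {0} ∪ {m | c ≤ m}

/-- Special numerical semigroup: every special gap other than F(S) is below the multiplicity. -/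
def IsSpecial (S : Set ℕ) : Prop := ∀ h ∈ SG S, h ≠ frob S → h < mult S

/-- The transform 𝒜, defined on non-special numerical semigroups. -/
noncomputable def Atrans (S : Set ℕ) : Set ℕ :=
  (S ∪ {sSup (SG S \ {frob S})}) \ {mult S}

/-- The sub-Frobenius number: the largest gap different from F(S). -/
noncomputable def subFrob (S : Set ℕ) : ℕ := sSup (Sᶜ \ {frob S})

/-- Almost-ordinary: exactly one gap greater than the multiplicity. -/
noncomputable def IsAlmostOrdinary (S : Set ℕ) : Prop := {h | h ∉ S ∧ mult S < h}.ncard = 1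

/-- The transform ℬ of Bras-Amorós. -/
noncomputable def Btrans (S : Set ℕ) : Set ℕ := (S \ {mult S}) ∪ {subFrob S}

/-- Closure under addition survives: a sum `a + b = x` with `a, b ≠ x` has both summands
nonzero, which minimality of `x` excludes. -/
theorem IsNumSgp.diff_singleton {S : Set ℕ} {x : ℕ} (hS : IsNumSgp S) (hx : IsMinGen S x) :
    IsNumSgp (S \ {x}) := by
  obtain ⟨h0, hadd, hfin⟩ := hS
  obtain ⟨-, hx0, hmin⟩ := hx
  refine ⟨⟨h0, Ne.symm hx0⟩, ?_, ?_⟩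
  · rintro a ⟨ha, hax : a ≠ x⟩ b ⟨hb, hbx : b ≠ x⟩
    refine ⟨hadd a ha b hb, fun hab : a + b = x => hmin ⟨a, ha, b, hb, ?_, ?_, hab.symm⟩⟩ <;> omega
  · rw [Set.compl_sdiff]
    exact (finite_singleton x).union hfin

theorem IsMinGen.of_isNumSgp_diff {S : Set ℕ} {x : ℕ} (hx : x ∈ S) (hSx : IsNumSgp (S \ {x})) :
    IsMinGen S x := by
  obtain ⟨⟨-, h0x : 0 ≠ x⟩, hadd, -⟩ := hSx
  refine ⟨hx, h0x.symm, ?_⟩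
  rintro ⟨a, ha, b, hb, ha0, hb0, rfl⟩
  exact (hadd a ⟨ha, fun h : a = a + b => by omega⟩ b ⟨hb, fun h : b = a + b => by omega⟩).2 rfl

theorem sgp_remove_minimal_generator (S : Set ℕ) (hS : IsNumSgp S) (x : ℕ) (hx : x ∈ S) :
    IsNumSgp (S \ {x}) ↔ IsMinGen S x :=
  ⟨IsMinGen.of_isNumSgp_diff hx, hS.diff_singleton⟩
end

section
/- Let g, n ∈ ℕ with g > 2 and 2 ≤ n ≤ g. Then the set S = {0} ∪ {g, g+1, …, g+n-2} ∪ {m ∈ ℕ : m ≥ g+n} is a numerical semigroup with Frobenius number g+n-1, genus g, and exactly n elements smaller than its Frobenius number. -/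
open Set

/-!
Every element of `[0, F(S)]` is either a left element or a gap, and every gap lies there, so
`n(S) + g(S) = F(S) + 1` for any `S` with finitely many gaps. The gaps of the given semigroup are
`1, …, g - 1` together with `g + n - 1`, so `F(S) = g + n - 1` and `g(S) = g`, whence `n(S) = n`.
Closure under addition holds because two nonzero elements sum to at least `2g ≥ g + n`.
-/

theorem leftEls_add_genus {S : Set ℕ} (hfin : Sᶜ.Finite) (hne : Sᶜ.Nonempty) :
    leftEls S + genus S = frob S + 1 := by
  have hfrob_mem : frob S ∈ Sᶜ := hne.csSup_mem hfin
  have hle_frob : ∀ x ∈ Sᶜ, x ≤ frob S := fun x hx => le_csSup hfin.bddAbove hx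
  have hdisj : Disjoint {s ∈ S | s < frob S} Sᶜ :=
    disjoint_left.mpr fun x hx hxc => hxc hx.1
  have hunion : {s ∈ S | s < frob S} ∪ Sᶜ = Iio (frob S + 1) := by
    ext x
    by_cases hx : x ∈ S
    · have : x ≠ frob S := fun h => hfrob_mem (h ▸ hx)
      simp only [mem_union, mem_ofPred_eq, mem_compl_iff, mem_Iio, hx, true_and,
        not_true_eq_false, or_false]
      omega
    · simpa [hx, Nat.lt_succ_iff] using hle_frob x hx
  rw [leftEls, genus, ← ncard_union_eq hdisj ((finite_Iio _).subset fun x hx => hx.2) hfin,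
    hunion, ncard_Iio_nat]

def almostOrdinarySgp (g n : ℕ) : Set ℕ :=
  {0} ∪ {x | g ≤ x ∧ x ≤ g + n - 2} ∪ {x | g + n ≤ x}

section almostOrdinarySgp

variable {g n : ℕ}

theorem mem_almostOrdinarySgp {x : ℕ} :
    x ∈ almostOrdinarySgp g n ↔ x = 0 ∨ (g ≤ x ∧ x ≤ g + n - 2) ∨ g + n ≤ x := by
  simp only [almostOrdinarySgp, mem_union, mem_singleton_iff, mem_ofPred_eq, or_assoc]

theorem compl_almostOrdinarySgp (h : 2 ≤ g + n) :
    (almostOrdinarySgp g n)ᶜ = Icc 1 (g - 1) ∪ {g + n - 1} := by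
  ext x
  simp only [mem_compl_iff, mem_almostOrdinarySgp, mem_union, mem_Icc, mem_singleton_iff]
  omega

theorem isNumSgp_almostOrdinarySgp (hn : 1 ≤ n) (hng : n ≤ g) :
    IsNumSgp (almostOrdinarySgp g n) := by
  refine ⟨mem_almostOrdinarySgp.mpr (Or.inl rfl), fun a ha b hb => ?_, ?_⟩
  · rw [mem_almostOrdinarySgp] at ha hb ⊢
    omega
  · rw [compl_almostOrdinarySgp (by omega)]
    exact (finite_Icc _ _).union (finite_singleton _)

theorem frob_almostOrdinarySgp (h : 2 ≤ g + n) :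
    frob (almostOrdinarySgp g n) = g + n - 1 := by
  rw [frob, compl_almostOrdinarySgp h]
  refine IsGreatest.csSup_eq ⟨Or.inr rfl, fun x hx => ?_⟩
  simp only [mem_union, mem_Icc, mem_singleton_iff] at hx
  omega

theorem genus_almostOrdinarySgp (hg : 1 ≤ g) (hn : 1 ≤ n) :
    genus (almostOrdinarySgp g n) = g := by
  have hdisj : Disjoint (Icc 1 (g - 1)) {g + n - 1} :=
    disjoint_singleton_right.mpr fun hx => by simp only [mem_Icc] at hx; omega
  rw [genus, compl_almostOrdinarySgp (by omega), ncard_union_eq hdisj, ncard_Icc_nat,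
    ncard_singleton]
  omega

end almostOrdinarySgp

theorem almost_ordinary_invariants_general (g n : ℕ) (hn2 : 2 ≤ n) (hng : n ≤ g)
    (S : Set ℕ)
    (hSdef : S = {0} ∪ {x | g ≤ x ∧ x ≤ g + n - 2} ∪ {x | g + n ≤ x}) :
    IsNumSgp S ∧ frob S = g + n - 1 ∧ genus S = g ∧ leftEls S = n := by
  change S = almostOrdinarySgp g n at hSdef
  subst hSdef
  have hsgp := isNumSgp_almostOrdinarySgp (by omega) hng
  have hfrob := frob_almostOrdinarySgp (by omega : 2 ≤ g + n)
  have hgenus := genus_almostOrdinarySgp (by omega : 1 ≤ g) (by omega : 1 ≤ n)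
  have hne : (almostOrdinarySgp g n)ᶜ.Nonempty := ⟨g + n - 1, by
    rw [compl_almostOrdinarySgp (by omega)]; exact Or.inr rfl⟩
  have hcount := leftEls_add_genus hsgp.2.2 hne
  exact ⟨hsgp, hfrob, hgenus, by omega⟩

theorem almost_ordinary_invariants (g n : ℕ) (hg : g > 2) (hn2 : 2 ≤ n) (hng : n ≤ g)
    (S : Set ℕ)
    (hSdef : S = {0} ∪ {x | g ≤ x ∧ x ≤ g + n - 2} ∪ {x | g + n ≤ x}) :
    IsNumSgp S ∧ frob S = g + n - 1 ∧ genus S = g ∧ leftEls S = n :=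
  almost_ordinary_invariants_general g n hn2 hng S hSdef
end

section
/- Let S be a numerical semigroup with Frobenius number F(S) > 2·m(S), where m(S) is the multiplicity. If S is not irreducible, then there exists a special gap h of S with h ≠ F(S) and h > m(S). -/
open Set

/-!
Since `S` is not irreducible it has a special gap `h ≠ F(S)`. If `h > m(S)` we are done. Otherwise
`0 < h < m(S)`, and then `F(S) - h` is a special gap: it is a gap because `h + (F(S) - h) = F(S)`,
while `2 (F(S) - h)` and `F(S) - h + s` for nonzero `s ∈ S` exceed `F(S)` because `2h < 2m(S) < F(S)`
and `s ≥ m(S) > h`. It lies above `m(S)`, again because `F(S) > 2 m(S)`.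
-/

theorem mult_le_of_mem {S : Set ℕ} {s : ℕ} (hs : s ∈ S) (hs0 : s ≠ 0) : mult S ≤ s :=
  Nat.sInf_le ⟨hs, hs0⟩

namespace IsNumSgp

variable {S : Set ℕ}

theorem zero_mem (hS : IsNumSgp S) : 0 ∈ S := hS.1

theorem mem_of_frob_lt (hS : IsNumSgp S) {x : ℕ} (hx : frob S < x) : x ∈ S := by
  by_contra hxS
  exact (le_csSup hS.2.2.bddAbove hxS).not_gt hx

theorem frob_notMem (hS : IsNumSgp S) (hF : 0 < frob S) : frob S ∉ S := by
  have hne : Sᶜ.Nonempty := by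
    by_contra h
    rw [not_nonempty_iff_eq_empty] at h
    simp [frob, h] at hF
  exact Nat.sSup_mem hne hS.2.2.bddAbove

theorem mult_mem (hS : IsNumSgp S) : mult S ∈ S :=
  (Nat.sInf_mem ⟨frob S + 1, hS.mem_of_frob_lt (Nat.lt_succ_self _), by simp⟩ :
    mult S ∈ S \ {0}).1

theorem ne_mult_of_mem_SG (hS : IsNumSgp S) {h : ℕ} (hh : h ∈ SG S) : h ≠ mult S :=
  fun he => hh.1 (he ▸ hS.mult_mem)

theorem pos_of_mem_SG (hS : IsNumSgp S) {h : ℕ} (hh : h ∈ SG S) : 0 < h :=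
  Nat.pos_of_ne_zero fun he => hh.1 (he ▸ hS.zero_mem)

theorem frob_mem_SG (hS : IsNumSgp S) (hF : 0 < frob S) : frob S ∈ SG S :=
  ⟨hS.frob_notMem hF, hS.mem_of_frob_lt (by omega),
    fun _ _ hs0 => hS.mem_of_frob_lt (by omega)⟩

theorem exists_mem_SG_ne_frob (hS : IsNumSgp S) (hF : 0 < frob S) (hirr : ¬ IsIrred S) :
    ∃ h ∈ SG S, h ≠ frob S := by
  by_contra! hc
  exact hirr (Set.eq_singleton_iff_unique_mem.2 ⟨hS.frob_mem_SG hF, hc⟩)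

theorem frob_sub_mem_SG (hS : IsNumSgp S) {h : ℕ} (hh : h ∈ SG S) (hm : h < mult S)
    (hF : 2 * h < frob S) : frob S - h ∈ SG S := by
  refine ⟨fun hmem => ?_, hS.mem_of_frob_lt (by omega), fun s hs hs0 => ?_⟩
  · have hsum : h + (frob S - h) ∈ S := hh.2.2 _ hmem (by omega)
    rw [Nat.add_sub_cancel' (by omega)] at hsum
    exact hS.frob_notMem (by omega) hsum
  · exact hS.mem_of_frob_lt (by have := mult_le_of_mem hs hs0; omega)

end IsNumSgp

theorem non_irreducible_large_frobenius_special_gap (S : Set ℕ) (hS : IsNumSgp S)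
    (hF : frob S > 2 * mult S) (hirr : ¬ IsIrred S) :
    ∃ h ∈ SG S, h ≠ frob S ∧ h > mult S := by
  obtain ⟨h, hh, hhF⟩ := hS.exists_mem_SG_ne_frob (by omega) hirr
  rcases (hS.ne_mult_of_mem_SG hh).lt_or_gt with hlt | hgt
  · have hpos := hS.pos_of_mem_SG hh
    exact ⟨frob S - h, hS.frob_sub_mem_SG hh hlt (by omega), by omega, by omega⟩
  · exact ⟨h, hh, hhF, hgt⟩
end

section
/- Let S be a numerical semigroup that is not irreducible. Then the maximum of the set of special gaps of S different from F(S) equals the maximum of the set {x ∉ S : F(S) - x ∉ S and 2x ≠ F(S)}, and this common maximum is strictly greater than F(S)/2. -/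
open Set

/-!
Let `m` be the largest gap `x` with `F - x` also a gap and `2x ≠ F`. If `2m < F`, then `F - m` would
be a larger such gap, so `2m > F` and `2m ∈ S`. If `m + s` were a gap for some nonzero `s ∈ S`, then
`F - (m + s)` is a gap too (adding `s` to it gives the gap `F - m`), contradicting maximality; so `m`
is a special gap, and `m ≠ F` because `F - F = 0 ∈ S`. Conversely every special gap `h ≠ F` has this
property, since `F - h ∈ S` would give `F = h + (F - h) ∈ S`.
-/

def mirroredGaps (S : Set ℕ) : Set ℕ :=
  {x | x ∉ S ∧ frob S - x ∉ S ∧ 2 * x ≠ frob S}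

section

variable {S : Set ℕ}

theorem le_frob_of_notMem (hfin : Sᶜ.Finite) {x : ℕ} (hx : x ∉ S) : x ≤ frob S :=
  le_csSup hfin.bddAbove hx

theorem mem_of_frob_lt (hfin : Sᶜ.Finite) {n : ℕ} (hn : frob S < n) : n ∈ S := by
  by_contra hnS
  exact (le_frob_of_notMem hfin hnS).not_gt hn

theorem frob_notMem (hfin : Sᶜ.Finite) (hne : S ≠ univ) : frob S ∉ S :=
  (nonempty_compl.mpr hne).csSup_mem hfin

theorem frob_mem_SG (hS : IsNumSgp S) (hne : S ≠ univ) : frob S ∈ SG S := by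
  have hF : frob S ∉ S := frob_notMem hS.2.2 hne
  have hF0 : frob S ≠ 0 := fun h => hF (h ▸ hS.1)
  exact ⟨hF, mem_of_frob_lt hS.2.2 (by omega),
    fun s _ hs0 => mem_of_frob_lt hS.2.2 (by omega)⟩

theorem SG_diff_frob_nonempty (hS : IsNumSgp S) (hne : S ≠ univ) (hirr : ¬ IsIrred S) :
    (SG S \ {frob S}).Nonempty := by
  rw [nonempty_iff_ne_empty, Ne, sdiff_eq_empty]
  exact fun hsub => hirr (hsub.antisymm (singleton_subset_iff.mpr (frob_mem_SG hS hne)))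

theorem SG_diff_frob_subset_mirroredGaps (hfin : Sᶜ.Finite) (hne : S ≠ univ) :
    SG S \ {frob S} ⊆ mirroredGaps S := by
  rintro h ⟨⟨hhS, h2h, hadd⟩, hhF⟩
  have hF : frob S ∉ S := frob_notMem hfin hne
  have hle : h ≤ frob S := le_frob_of_notMem hfin hhS
  refine ⟨hhS, fun hdual => ?_, fun h2F => hF (h2F ▸ h2h)⟩
  have hpos : frob S - h ≠ 0 := by
    rw [mem_singleton_iff] at hhF
    omega
  have hsum : h + (frob S - h) = frob S := by omega
  exact hF (hsum ▸ hadd _ hdual hpos)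

theorem isGreatest_sSup_mirroredGaps (hfin : Sᶜ.Finite) (hne : (mirroredGaps S).Nonempty) :
    IsGreatest (mirroredGaps S) (sSup (mirroredGaps S)) :=
  have hBfin : (mirroredGaps S).Finite := hfin.subset fun _ hx => hx.1
  ⟨hne.csSup_mem hBfin, fun _ hx => le_csSup hBfin.bddAbove hx⟩

variable {m : ℕ}

theorem frob_lt_two_mul_of_isGreatest (hfin : Sᶜ.Finite) (hm : IsGreatest (mirroredGaps S) m) :
    frob S < 2 * m := by
  obtain ⟨⟨hmS, hFmS, h2m⟩, hmax⟩ := hm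
  have hle : m ≤ frob S := le_frob_of_notMem hfin hmS
  by_contra! hcon
  have hdual : frob S - (frob S - m) = m := by omega
  have hmem : frob S - m ∈ mirroredGaps S := ⟨hFmS, hdual.symm ▸ hmS, by omega⟩
  have hmax' : frob S - m ≤ m := hmax hmem
  omega

theorem mem_SG_of_isGreatest (hS : IsNumSgp S) (hm : IsGreatest (mirroredGaps S) m) :
    m ∈ SG S := by
  obtain ⟨h0, hadd, hfin⟩ := hS
  have h2m : frob S < 2 * m := frob_lt_two_mul_of_isGreatest hfin hm
  obtain ⟨⟨hmS, hFmS, -⟩, hmax⟩ := hm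
  refine ⟨hmS, mem_of_frob_lt hfin h2m, fun s hs hs0 => ?_⟩
  by_contra hms
  have hle : m + s ≤ frob S := le_frob_of_notMem hfin hms
  have hshift : frob S - (m + s) + s = frob S - m := by omega
  have hmem : m + s ∈ mirroredGaps S :=
    ⟨hms, fun hy => hFmS (hshift ▸ hadd _ hy _ hs), by omega⟩
  have hmax' : m + s ≤ m := hmax hmem
  omega

theorem ne_frob_of_mem_mirroredGaps (h0 : 0 ∈ S) (hm : m ∈ mirroredGaps S) : m ≠ frob S := by
  rintro rfl
  exact hm.2.1 (by simpa using h0)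

end

theorem max_special_gap_eq (S : Set ℕ) (hS : IsNumSgp S) (hne : S ≠ Set.univ)
    (hirr : ¬ IsIrred S) :
    sSup (SG S \ {frob S}) = sSup {x | x ∉ S ∧ frob S - x ∉ S ∧ 2 * x ≠ frob S} ∧
    2 * sSup (SG S \ {frob S}) > frob S := by
  have hsub := SG_diff_frob_subset_mirroredGaps hS.2.2 hne
  have hB := isGreatest_sSup_mirroredGaps hS.2.2 ((SG_diff_frob_nonempty hS hne hirr).mono hsub)
  have hA : IsGreatest (SG S \ {frob S}) (sSup (mirroredGaps S)) :=
    ⟨⟨mem_SG_of_isGreatest hS hB, ne_frob_of_mem_mirroredGaps hS.1 hB.1⟩,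
      fun _ hx => hB.2 (hsub hx)⟩
  rw [hA.csSup_eq]
  exact ⟨rfl, frob_lt_two_mul_of_isGreatest hS.2.2 hB⟩
end

section
/- Let S be a non-special numerical semigroup with minimal generators m(S) = n₁ < n₂ < … < n_t, let h = max(SG(S) \ {F(S)}), and let T = (S ∪ {h}) \ {m(S)}. If m(S) + h ≥ n_r for some r ∈ {1, …, t}, then n₂, n₃, …, n_r are minimal generators of T. -/
open Set

/-!
Every nonzero element of `T = (S ∪ {h}) \ {m}` exceeds `m`, because `m < h` for a non-special `S`.
So in a decomposition `nᵢ = a + b` in `T` with `h` among the summands, the sum exceeds `m + h ≥ nᵢ`;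
and a decomposition with both summands in `S` contradicts the minimality of `nᵢ` in `S`.
-/

theorem IsNumSgp.mult_mem_s13 {S : Set ℕ} (hS : IsNumSgp S) : mult S ∈ S \ {0} := by
  have hSinf : S.Infinite := by simpa using hS.2.2.infinite_compl
  exact Nat.sInf_mem (hSinf.sdiff (finite_singleton 0)).nonempty

theorem mult_le_of_mem_s13 {S : Set ℕ} {x : ℕ} (hx : x ∈ S) (hx0 : x ≠ 0) : mult S ≤ x :=
  Nat.sInf_le ⟨hx, hx0⟩

theorem mult_lt_sSup_SG_diff_frob {S : Set ℕ} (hS : IsNumSgp S) (hsp : ¬ IsSpecial S) :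
    mult S < sSup (SG S \ {frob S}) := by
  simp only [IsSpecial, not_forall, not_lt] at hsp
  obtain ⟨h, hSG, hF, hmh⟩ := hsp
  have hbdd : BddAbove (SG S \ {frob S}) :=
    (hS.2.2.subset fun x hx => hx.1.1).bddAbove
  have hhm : h ≠ mult S := fun e => hSG.1 (e ▸ hS.mult_mem_s13.1)
  exact (lt_of_le_of_ne hmh hhm.symm).trans_le (le_csSup hbdd ⟨hSG, hF⟩)

theorem mult_lt_of_mem_union_diff {S : Set ℕ} {h y : ℕ} (hmh : mult S < h)
    (hy : y ∈ (S ∪ {h}) \ {mult S}) (hy0 : y ≠ 0) : mult S < y := by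
  obtain ⟨hyS | rfl, hym⟩ := hy
  · exact lt_of_le_of_ne (mult_le_of_mem_s13 hyS hy0) (Ne.symm hym)
  · exact hmh

theorem IsMinGen.union_diff_mult {S : Set ℕ} {h x : ℕ} (hx : IsMinGen S x) (hmh : mult S < h)
    (hxm : x ≠ mult S) (hxh : x ≤ mult S + h) : IsMinGen ((S ∪ {h}) \ {mult S}) x := by
  obtain ⟨hxS, hx0, hxmin⟩ := hx
  refine ⟨⟨Or.inl hxS, hxm⟩, hx0, ?_⟩
  rintro ⟨a, ha, b, hb, ha0, hb0, rfl⟩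
  have hma := mult_lt_of_mem_union_diff hmh ha ha0
  have hmb := mult_lt_of_mem_union_diff hmh hb hb0
  obtain ⟨haS | rfl, -⟩ := ha
  · obtain ⟨hbS | rfl, -⟩ := hb
    · exact hxmin ⟨a, haS, b, hbS, ha0, hb0, rfl⟩
    · omega
  · omega

theorem Atrans_min_gens_below_general (S : Set ℕ) (hS : IsNumSgp S) (hsp : ¬ IsSpecial S)
    (t : ℕ) (n : ℕ → ℕ)
    (hmono : ∀ i j, 1 ≤ i → i < j → j ≤ t → n i < n j)
    (hgens : {x | IsMinGen S x} = n '' (Set.Icc 1 t))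
    (hn1 : n 1 = mult S)
    (r : ℕ) (hrt : r ≤ t)
    (hle : n r ≤ mult S + sSup (SG S \ {frob S})) :
    ∀ i, 2 ≤ i → i ≤ r → IsMinGen (Atrans S) (n i) := by
  intro i hi2 hir
  have hgen : IsMinGen S (n i) := by
    change n i ∈ {x | IsMinGen S x}
    rw [hgens]
    exact ⟨i, ⟨by omega, by omega⟩, rfl⟩
  have hm : mult S < n i := hn1 ▸ hmono 1 i le_rfl (by omega) (by omega)
  have hnir : n i ≤ n r := by
    rcases hir.eq_or_lt with rfl | hlt
    · exact le_rfl
    · exact (hmono i r (by omega) hlt hrt).le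
  exact hgen.union_diff_mult (mult_lt_sSup_SG_diff_frob hS hsp) hm.ne' (hnir.trans hle)

theorem Atrans_min_gens_below (S : Set ℕ) (hS : IsNumSgp S) (hsp : ¬ IsSpecial S)
    (t : ℕ) (n : ℕ → ℕ)
    (hmono : ∀ i j, 1 ≤ i → i < j → j ≤ t → n i < n j)
    (hgens : {x | IsMinGen S x} = n '' (Set.Icc 1 t))
    (hn1 : n 1 = mult S)
    (r : ℕ) (hr1 : 1 ≤ r) (hrt : r ≤ t)
    (hle : n r ≤ mult S + sSup (SG S \ {frob S})) :
    ∀ i, 2 ≤ i → i ≤ r → IsMinGen (Atrans S) (n i) :=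
  Atrans_min_gens_below_general S hS hsp t n hmono hgens hn1 r hrt hle
end
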